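/- arXiv:2603.03518 — 2 statements merged into one kernel-verified Lean document; each statement's English description precedes it below -/
import Mathlib

section
/- Let G, H, K be groups. If S ≤ G × H is an isogeny (π₁(S) has finite index in G, π₂(S) has finite index in H, ker(S) and coker(S) are finite) and T ≤ H × K is an isogeny, then the composition S ∘ T := {(g,k) : ∃ h, (g,h) ∈ S ∧ (h,k) ∈ T} is a subgroup of G × K with finite kernel and finite cokernel. -/
/-!
An element `g` of the kernel of `S ∘ T` comes with a witness `h` in the (finite) kernel of `T`
such that `(g, h) ∈ S`, and for fixed `h` the solutions `g` of `(g, h) ∈ S` form a coset of the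
(finite) kernel of `S`. So the kernel of `S ∘ T` lies in a finite union of finite sets. Swapping
the factors exchanges kernels and cokernels and reverses the composition, which gives the
cokernel.
-/

namespace Subgroup

variable {G H K : Type*} [Group G] [Group H] [Group K]

def relComp (S : Subgroup (G × H)) (T : Subgroup (H × K)) : Subgroup (G × K) where
  carrier := {p | ∃ h, (p.1, h) ∈ S ∧ (h, p.2) ∈ T}
  one_mem' := ⟨1, S.one_mem, T.one_mem⟩
  mul_mem' := fun ⟨h₁, hs₁, ht₁⟩ ⟨h₂, hs₂, ht₂⟩ =>
    ⟨h₁ * h₂, S.mul_mem hs₁ hs₂, T.mul_mem ht₁ ht₂⟩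
  inv_mem' := fun ⟨h, hs, ht⟩ => ⟨h⁻¹, S.inv_mem hs, T.inv_mem ht⟩

theorem finite_setOf_mk_mem (S : Subgroup (G × H))
    (hS : Finite (S.comap (MonoidHom.inl G H))) (h : H) : {g : G | (g, h) ∈ S}.Finite := by
  rcases Set.eq_empty_or_nonempty {g : G | (g, h) ∈ S} with hempty | ⟨g₀, hg₀⟩
  · simp [hempty]
  · refine ((S.comap (MonoidHom.inl G H) : Set G).toFinite.image (· * g₀)).subset ?_
    intro g hg
    refine ⟨g * g₀⁻¹, ?_, inv_mul_cancel_right g g₀⟩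
    simpa using S.mul_mem hg (S.inv_mem hg₀)

theorem finite_comap_inl_relComp (S : Subgroup (G × H)) (T : Subgroup (H × K))
    (hS : Finite (S.comap (MonoidHom.inl G H))) (hT : Finite (T.comap (MonoidHom.inl H K))) :
    Finite ((S.relComp T).comap (MonoidHom.inl G K)) := by
  have hsub : ((S.relComp T).comap (MonoidHom.inl G K) : Set G) ⊆
      ⋃ h ∈ (T.comap (MonoidHom.inl H K) : Set H), {g | (g, h) ∈ S} := by
    rintro g ⟨h, hgh, hh⟩
    exact Set.mem_biUnion hh hgh
  exact ((Set.toFinite _).biUnion fun h _ => finite_setOf_mk_mem S hS h).subset hsub |>.to_subtype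

theorem comap_prodComm_relComp (S : Subgroup (G × H)) (T : Subgroup (H × K)) :
    (S.relComp T).comap (MulEquiv.prodComm : K × G ≃* G × K).toMonoidHom =
      (T.comap (MulEquiv.prodComm : K × H ≃* H × K).toMonoidHom).relComp
        (S.comap (MulEquiv.prodComm : H × G ≃* G × H).toMonoidHom) := by
  ext p
  exact exists_congr fun _ => and_comm

theorem finite_comap_inr_relComp (S : Subgroup (G × H)) (T : Subgroup (H × K))
    (hS : Finite (S.comap (MonoidHom.inr G H))) (hT : Finite (T.comap (MonoidHom.inr H K))) :
    Finite ((S.relComp T).comap (MonoidHom.inr G K)) := by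
  have h := finite_comap_inl_relComp (T.comap (MulEquiv.prodComm : K × H ≃* H × K).toMonoidHom)
    (S.comap (MulEquiv.prodComm : H × G ≃* G × H).toMonoidHom) hT hS
  rwa [← comap_prodComm_relComp] at h

end Subgroup

theorem stmt_3_general {G H K : Type*} [Group G] [Group H] [Group K]
    (S : Subgroup (G × H)) (T : Subgroup (H × K))
    (hSker : Finite (S.comap (MonoidHom.inl G H)))
    (hScoker : Finite (S.comap (MonoidHom.inr G H)))
    (hTker : Finite (T.comap (MonoidHom.inl H K)))
    (hTcoker : Finite (T.comap (MonoidHom.inr H K))) :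
    ∃ U : Subgroup (G × K),
      (U : Set (G × K)) = {p : G × K | ∃ h : H, (p.1, h) ∈ S ∧ (h, p.2) ∈ T} ∧
      Finite (U.comap (MonoidHom.inl G K)) ∧ Finite (U.comap (MonoidHom.inr G K)) :=
  ⟨S.relComp T, rfl, S.finite_comap_inl_relComp T hSker hTker,
    S.finite_comap_inr_relComp T hScoker hTcoker⟩

/-- Composition of isogenies: if `S ≤ G × H` and `T ≤ H × K` are isogenies, then
`S ∘ T = {(g,k) | ∃ h, (g,h) ∈ S ∧ (h,k) ∈ T}` is a subgroup of `G × K` with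
finite kernel and finite cokernel. -/
theorem stmt_3 {G H K : Type*} [Group G] [Group H] [Group K]
    (S : Subgroup (G × H)) (T : Subgroup (H × K))
    (hS1 : (S.map (MonoidHom.fst G H)).FiniteIndex)
    (hS2 : (S.map (MonoidHom.snd G H)).FiniteIndex)
    (hSker : Finite (S.comap (MonoidHom.inl G H)))
    (hScoker : Finite (S.comap (MonoidHom.inr G H)))
    (hT1 : (T.map (MonoidHom.fst H K)).FiniteIndex)
    (hT2 : (T.map (MonoidHom.snd H K)).FiniteIndex)
    (hTker : Finite (T.comap (MonoidHom.inl H K)))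
    (hTcoker : Finite (T.comap (MonoidHom.inr H K))) :
    ∃ U : Subgroup (G × K),
      (U : Set (G × K)) = {p : G × K | ∃ h : H, (p.1, h) ∈ S ∧ (h, p.2) ∈ T} ∧
      Finite (U.comap (MonoidHom.inl G K)) ∧ Finite (U.comap (MonoidHom.inr G K)) :=
  stmt_3_general S T hSker hScoker hTker hTcoker
end

section
/- Let G₁₂ ≤ G₁ × G₂ and G₂₃ ≤ G₂ × G₃ be subgroups of products of finite groups, H₁ = π₂(G₁₂) ≤ G₂, H₃ = π₁(G₂₃) ≤ G₂, g₀ ∈ G₂, and let G₁₂₃ = {(g₁, g₀⁻¹g₂g₀, g₂, g₃) : (g₁, g₀⁻¹g₂g₀) ∈ G₁₂, (g₂,g₃) ∈ G₂₃}. Then |G₁₂₃| = |G₁₂| · |G₂₃| / |H₃ g₀ H₁| · (|g₀ H₁ g₀⁻¹ ∩ H₃| · |H₃ g₀ H₁|) / (|H₁| · |H₃|), equivalently, |G₁₂₃| · |H₁| · |H₃| = |G₁₂| · |G₂₃| · |g₀H₁g₀⁻¹ ∩ H₃|. -/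
lemma nat_card_sigma_const {ι : Type*} [Finite ι] (f : ι → Type*) [∀ i, Finite (f i)] (c : ℕ)
    (h : ∀ i, Nat.card (f i) = c) : Nat.card (Σ i, f i) = Nat.card ι * c := by
  have : Fintype ι := Fintype.ofFinite ι
  have fi : ∀ i, Fintype (f i) := fun i => Fintype.ofFinite _
  have h' : ∀ i, Fintype.card (f i) = c := fun i => by rw [← h i, Nat.card_eq_fintype_card]
  simp only [Nat.card_eq_fintype_card, Fintype.card_sigma, h', Finset.sum_const,
    Finset.card_univ, smul_eq_mul]

lemma fiber_card_aux {G H : Type*} [Group G] [Group H] [Finite G] (f : G →* H)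
    {y : H} (hy : y ∈ f.range) :
    Nat.card {g : G // f g = y} = Nat.card f.ker := by
  obtain ⟨z, hz⟩ := hy
  refine Nat.card_congr ⟨fun g => ⟨z⁻¹ * g, ?_⟩, fun k => ⟨z * k, ?_⟩, fun g => ?_, fun k => ?_⟩
  · simp [MonoidHom.mem_ker, map_mul, hz, g.2]
  · have hk := k.2
    rw [MonoidHom.mem_ker] at hk
    simp [map_mul, hz, hk]
  · ext; simp
  · ext; simp

lemma card_eq_range_mul_ker_aux {G H : Type*} [Group G] [Group H] [Finite G] (f : G →* H) :
    Nat.card G = Nat.card f.range * Nat.card f.ker := by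
  rw [Subgroup.card_eq_card_quotient_mul_card_subgroup f.ker,
    Nat.card_congr (QuotientGroup.quotientKerEquivRange f).toEquiv]

/-- Finite cardinality analogue of the dimension equation for the twisted fiber
product: with `H₁ = π₂(G₁₂)`, `H₃ = π₁(G₂₃)` and
`G₁₂₃ = {(g₁, g₀⁻¹g₂g₀, g₂, g₃) | (g₁, g₀⁻¹g₂g₀) ∈ G₁₂, (g₂,g₃) ∈ G₂₃}`,
one has `|G₁₂₃| ⬝ |H₁| ⬝ |H₃| = |G₁₂| ⬝ |G₂₃| ⬝ |g₀H₁g₀⁻¹ ∩ H₃|`. -/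
theorem stmt_18 {G₁ G₂ G₃ : Type*} [Group G₁] [Group G₂] [Group G₃]
    [Finite G₁] [Finite G₂] [Finite G₃]
    (G₁₂ : Subgroup (G₁ × G₂)) (G₂₃ : Subgroup (G₂ × G₃)) (g₀ : G₂) :
    Nat.card {p : G₁ × G₂ × G₂ × G₃ |
        p.2.1 = g₀⁻¹ * p.2.2.1 * g₀ ∧
        (p.1, p.2.1) ∈ G₁₂ ∧ (p.2.2.1, p.2.2.2) ∈ G₂₃} *
      Nat.card (G₁₂.map (MonoidHom.snd G₁ G₂)) *
      Nat.card (G₂₃.map (MonoidHom.fst G₂ G₃)) =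
    Nat.card G₁₂ * Nat.card G₂₃ *
      Nat.card {x : G₂ | g₀⁻¹ * x * g₀ ∈ G₁₂.map (MonoidHom.snd G₁ G₂) ∧
        x ∈ G₂₃.map (MonoidHom.fst G₂ G₃)} := by
  set φ : G₁₂ →* G₂ := (MonoidHom.snd G₁ G₂).comp G₁₂.subtype with hφ
  set ψ : G₂₃ →* G₂ := (MonoidHom.fst G₂ G₃).comp G₂₃.subtype with hψ
  have hφr : φ.range = G₁₂.map (MonoidHom.snd G₁ G₂) := by
    rw [hφ, MonoidHom.range_comp, Subgroup.range_subtype]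
  have hψr : ψ.range = G₂₃.map (MonoidHom.fst G₂ G₃) := by
    rw [hψ, MonoidHom.range_comp, Subgroup.range_subtype]
  set K := {x : G₂ | g₀⁻¹ * x * g₀ ∈ G₁₂.map (MonoidHom.snd G₁ G₂) ∧
        x ∈ G₂₃.map (MonoidHom.fst G₂ G₃)} with hK
  have e : {p : G₁ × G₂ × G₂ × G₃ |
        p.2.1 = g₀⁻¹ * p.2.2.1 * g₀ ∧
        (p.1, p.2.1) ∈ G₁₂ ∧ (p.2.2.1, p.2.2.2) ∈ G₂₃} ≃
      Σ x : K, {a : G₁₂ // φ a = g₀⁻¹ * (x : G₂) * g₀} × {b : G₂₃ // ψ b = x} := by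
    refine ⟨fun p => ⟨⟨p.1.2.2.1, ⟨?_, ?_⟩⟩,
        ⟨⟨(p.1.1, p.1.2.1), p.2.2.1⟩, ?_⟩, ⟨⟨(p.1.2.2.1, p.1.2.2.2), p.2.2.2⟩, rfl⟩⟩,
      fun q => ⟨(q.2.1.1.1.1, q.2.1.1.1.2, q.2.2.1.1.1, q.2.2.1.1.2), ?_, ?_, ?_⟩,
      fun p => ?_, fun q => ?_⟩
    · exact ⟨(p.1.1, g₀⁻¹ * p.1.2.2.1 * g₀), by rw [← p.2.1]; exact p.2.2.1, rfl⟩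
    · exact ⟨(p.1.2.2.1, p.1.2.2.2), p.2.2.2, rfl⟩
    · exact p.2.1
    · have hb : (↑q.2.2.1 : G₂ × G₃).1 = (q.1 : G₂) := q.2.2.2
      have ha : (↑q.2.1.1 : G₁ × G₂).2 = g₀⁻¹ * (q.1 : G₂) * g₀ := q.2.1.2
      show (↑q.2.1.1 : G₁ × G₂).2 = g₀⁻¹ * (↑q.2.2.1 : G₂ × G₃).1 * g₀
      rw [hb, ha]
    · exact q.2.1.1.2
    · exact q.2.2.1.2
    · rfl
    · obtain ⟨⟨x, hx⟩, ⟨a, ha⟩, ⟨b, hb⟩⟩ := q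
      have hb' : (↑b : G₂ × G₃).1 = x := hb
      subst hb'
      rfl
  have fin : ∀ x : K, Finite ({a : G₁₂ // φ a = g₀⁻¹ * (x : G₂) * g₀} ×
      {b : G₂₃ // ψ b = (x : G₂)}) := fun x => inferInstance
  have hcard : Nat.card {p : G₁ × G₂ × G₂ × G₃ |
        p.2.1 = g₀⁻¹ * p.2.2.1 * g₀ ∧
        (p.1, p.2.1) ∈ G₁₂ ∧ (p.2.2.1, p.2.2.2) ∈ G₂₃} =
      Nat.card K * (Nat.card φ.ker * Nat.card ψ.ker) := by
    rw [Nat.card_congr e]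
    exact nat_card_sigma_const _ _ (fun x => by
      rw [Nat.card_prod, fiber_card_aux φ (by rw [hφr]; exact x.2.1),
        fiber_card_aux ψ (by rw [hψr]; exact x.2.2)])
  rw [hcard, ← hφr, ← hψr, card_eq_range_mul_ker_aux φ, card_eq_range_mul_ker_aux ψ]
  ring
end
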